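/- For i = 1,2 let A_i, B_i, C_i be qubit observables with Bloch vectors a_i, b_i, c_i ∈ ℝ³, and assume each of the pairs {a₁,a₂}, {b₁,b₂}, {c₁,c₂} is linearly independent. Define the 8×8 Hermitian matrices M_i = A_i ⊗ I ⊗ I + I ⊗ B_i ⊗ I + I ⊗ I ⊗ C_i (Kronecker products, I the 2×2 identity). If ρ is a fully separable tripartite density matrix, i.e. ρ = Σ_k p_k · ρ_{k,A} ⊗ ρ_{k,B} ⊗ ρ_{k,C} is a finite convex combination (p_k ≥ 0, Σ_k p_k = 1) of Kronecker products of qubit density matrices, then (Δ_ρM₁)² + (Δ_ρM₂)² ≥ λ_min(T_{a₁,a₂}) + λ_min(T_{b₁,b₂}) + λ_min(T_{c₁,c₂}). -/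

import Mathlib

open Matrix MeasureTheory Filter Set
open scoped RealInnerProductSpace Kronecker ComplexOrder

noncomputable section

/-- ℝ³ with the Euclidean norm and inner product. -/
abbrev E3 : Type := EuclideanSpace ℝ (Fin 3)

/-- The Pauli matrices. -/
def pauli1 : Matrix (Fin 2) (Fin 2) ℂ := !![0, 1; 1, 0]
def pauli2 : Matrix (Fin 2) (Fin 2) ℂ := !![0, -Complex.I; Complex.I, 0]
def pauli3 : Matrix (Fin 2) (Fin 2) ℂ := !![1, 0; 0, -1]

/-- The qubit observable `a₀·I + a·σ`. -/
def qObs (a0 : ℝ) (a : E3) : Matrix (Fin 2) (Fin 2) ℂ :=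
  (a0 : ℂ) • (1 : Matrix (Fin 2) (Fin 2) ℂ)
    + (a 0 : ℂ) • pauli1 + (a 1 : ℂ) • pauli2 + (a 2 : ℂ) • pauli3

/-- A density matrix: positive semidefinite with trace one. -/
def IsDensityMatrix {n : Type*} [Fintype n] (ρ : Matrix n n ℂ) : Prop :=
  ρ.PosSemidef ∧ ρ.trace = 1

/-- Mean value `⟨M⟩_ρ = Tr(Mρ)` of an observable `M` in the state `ρ`. -/
def mean {n : Type*} [Fintype n] (M ρ : Matrix n n ℂ) : ℝ :=
  (Matrix.trace (M * ρ)).re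

/-- Variance `(Δ_ρ M)² = Tr(M²ρ) − (Tr(Mρ))²`. -/
def variance {n : Type*} [Fintype n] (M ρ : Matrix n n ℂ) : ℝ :=
  (Matrix.trace (M * M * ρ)).re - (mean M ρ) ^ 2

/-- Uncertainty `Δ_ρ M` (standard deviation). -/
def uncertainty {n : Type*} [Fintype n] (M ρ : Matrix n n ℂ) : ℝ :=
  Real.sqrt (variance M ρ)

/-- Gram matrix of a tuple of vectors in ℝ³. -/
def gram {m : ℕ} (v : Fin m → E3) : Matrix (Fin m) (Fin m) ℝ :=
  Matrix.of fun i j => (inner ℝ (v i) (v j) : ℝ)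

lemma gram_isHermitian {m : ℕ} (v : Fin m → E3) : (gram v).IsHermitian := by
  ext i j
  simp [_root_.gram, Matrix.conjTranspose_apply, mul_comm, real_inner_comm]

/-- Smallest eigenvalue of the Gram matrix. -/
def lamMin {m : ℕ} (v : Fin m → E3) : ℝ := ⨅ i, (gram_isHermitian v).eigenvalues i

/-- Largest eigenvalue of the Gram matrix. -/
def lamMax {m : ℕ} (v : Fin m → E3) : ℝ := ⨆ i, (gram_isHermitian v).eigenvalues i

/-- The tripartite observable A ⊗ I ⊗ I + I ⊗ B ⊗ I + I ⊗ I ⊗ C. -/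
def obs3 (A B C : Matrix (Fin 2) (Fin 2) ℂ) :
    Matrix ((Fin 2 × Fin 2) × Fin 2) ((Fin 2 × Fin 2) × Fin 2) ℂ :=
  A ⊗ₖ (1 : Matrix (Fin 2) (Fin 2) ℂ) ⊗ₖ (1 : Matrix (Fin 2) (Fin 2) ℂ)
    + (1 : Matrix (Fin 2) (Fin 2) ℂ) ⊗ₖ B ⊗ₖ (1 : Matrix (Fin 2) (Fin 2) ℂ)
    + (1 : Matrix (Fin 2) (Fin 2) ℂ) ⊗ₖ (1 : Matrix (Fin 2) (Fin 2) ℂ) ⊗ₖ C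

/-!
Variance is concave in the state, so it suffices to bound `(Δ M₁)² + (Δ M₂)²` on product
states, where it splits into the three local sums `Var A₁ + Var A₂`, etc. For a qubit state
with Bloch vector `r` (so `‖r‖ ≤ 1`) one has `Var(a₀ + a·σ) = ‖a‖² − ⟪a, r⟫²`. Writing
`s = ⟪a₁, r⟫ a₁ + ⟪a₂, r⟫ a₂`, Cauchy–Schwarz and the Rayleigh bound
`‖s‖² ≤ λ_max(T) ∑ ⟪aᵢ, r⟫²` give `∑ ⟪aᵢ, r⟫² ≤ λ_max(T)`, while
`‖a₁‖² + ‖a₂‖² = tr T = λ_min(T) + λ_max(T)`.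
-/

open scoped MatrixOrder in
theorem Matrix.IsHermitian.star_dotProduct_mulVec_le {𝕜 n : Type*} [RCLike 𝕜] [Fintype n]
    [DecidableEq n] {A : Matrix n n 𝕜} (hA : A.IsHermitian) {c : ℝ}
    (hc : ∀ i, hA.eigenvalues i ≤ c) (x : n → 𝕜) :
    star x ⬝ᵥ A *ᵥ x ≤ c * (star x ⬝ᵥ x) := by
  have hle : A ≤ algebraMap ℝ (Matrix n n 𝕜) c := by
    refine le_algebraMap_of_spectrum_le ?_ hA.isSelfAdjoint
    rw [hA.spectrum_real_eq_range_eigenvalues]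
    rintro _ ⟨i, rfl⟩
    exact hc i
  have := (Matrix.le_iff.mp hle).dotProduct_mulVec_nonneg x
  rwa [Matrix.sub_mulVec, dotProduct_sub, sub_nonneg, Algebra.algebraMap_eq_smul_one,
    Matrix.smul_mulVec, Matrix.one_mulVec, dotProduct_smul, RCLike.real_smul_eq_coe_mul] at this

theorem Matrix.IsHermitian.im_trace_mul_eq_zero {n : Type*} [Fintype n] {M ρ : Matrix n n ℂ}
    (hM : M.IsHermitian) (hρ : ρ.IsHermitian) : (M * ρ).trace.im = 0 := by
  apply Complex.conj_eq_iff_im.mp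
  rw [← Complex.star_def, ← Matrix.trace_conjTranspose, Matrix.conjTranspose_mul, hM.eq, hρ.eq,
    Matrix.trace_mul_comm]

theorem eigenvalues_gram_le_lamMax {m : ℕ} (v : Fin m → E3) (i : Fin m) :
    (gram_isHermitian v).eigenvalues i ≤ lamMax v :=
  le_ciSup (Set.finite_range _).bddAbove i

theorem lamMax_nonneg {m : ℕ} (v : Fin m → E3) : 0 ≤ lamMax v :=
  Real.iSup_nonneg (Matrix.posSemidef_gram ℝ v).eigenvalues_nonneg

theorem trace_gram {m : ℕ} (v : Fin m → E3) : (gram v).trace = ∑ i, ‖v i‖ ^ 2 := by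
  simp [Matrix.trace, _root_.gram]

theorem lamMin_add_lamMax_le (v : Fin 2 → E3) :
    lamMin v + lamMax v ≤ ‖v 0‖ ^ 2 + ‖v 1‖ ^ 2 := by
  set e := (gram_isHermitian v).eigenvalues
  have htrace : e 0 + e 1 = ‖v 0‖ ^ 2 + ‖v 1‖ ^ 2 := by
    simpa [trace_gram, Fin.sum_univ_two] using (gram_isHermitian v).trace_eq_sum_eigenvalues.symm
  obtain ⟨i, hi⟩ : ∃ i, e i = lamMax v := exists_eq_ciSup_of_finite
  have hmin : lamMin v ≤ e i.rev := ciInf_le (Set.finite_range _).bddBelow _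
  have hpair : e i + e i.rev = e 0 + e 1 := by fin_cases i <;> simp [add_comm]
  linarith

theorem sum_inner_sq_le_lamMax {m : ℕ} (v : Fin m → E3) (r : E3) :
    ∑ i, ⟪v i, r⟫ ^ 2 ≤ lamMax v * ‖r‖ ^ 2 := by
  set w : Fin m → ℝ := fun i => ⟪v i, r⟫
  set s : E3 := ∑ i, w i • v i
  set S := ∑ i, w i ^ 2
  have hsr : ⟪s, r⟫ = S := by
    simp [s, S, w, sum_inner, real_inner_smul_left, sq]
  have hss : ‖s‖ ^ 2 ≤ lamMax v * S := by
    have := (gram_isHermitian v).star_dotProduct_mulVec_le (eigenvalues_gram_le_lamMax v) w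
    rw [show gram v = Matrix.gram ℝ v from rfl, Matrix.star_dotProduct_gram_mulVec] at this
    simpa [s, S, dotProduct, sq, real_inner_self_eq_norm_sq] using this
  have hCS : S * S ≤ ‖s‖ ^ 2 * ‖r‖ ^ 2 := by
    simpa only [hsr, real_inner_self_eq_norm_sq] using real_inner_mul_inner_self_le s r
  rcases (show 0 ≤ S by positivity).eq_or_lt with hS | hS
  · rw [← hS]
    exact mul_nonneg (lamMax_nonneg v) (sq_nonneg _)
  · refine le_of_mul_le_mul_left ?_ hS
    calc S * S ≤ ‖s‖ ^ 2 * ‖r‖ ^ 2 := hCS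
      _ ≤ lamMax v * S * ‖r‖ ^ 2 := by gcongr
      _ = S * (lamMax v * ‖r‖ ^ 2) := by ring

theorem qObs_isHermitian (a0 : ℝ) (a : E3) : (qObs a0 a).IsHermitian := by
  ext i j
  fin_cases i <;> fin_cases j <;>
    simp [qObs, pauli1, pauli2, pauli3, Matrix.conjTranspose_apply]

theorem qObs_mul_self (a0 : ℝ) (a : E3) :
    qObs a0 a * qObs a0 a = qObs (a0 ^ 2 + ‖a‖ ^ 2) ((2 * a0) • a) := by
  rw [EuclideanSpace.norm_sq_eq, Fin.sum_univ_three]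
  ext i j
  fin_cases i <;> fin_cases j <;>
    simp [qObs, pauli1, pauli2, pauli3, Matrix.mul_apply, Fin.sum_univ_two, Complex.ext_iff,
      -Complex.ofReal_pow] <;>
    constructor <;> ring

def blochVector (ρ : Matrix (Fin 2) (Fin 2) ℂ) : E3 :=
  !₂[mean pauli1 ρ, mean pauli2 ρ, mean pauli3 ρ]

theorem mean_qObs {ρ : Matrix (Fin 2) (Fin 2) ℂ} (hρ : ρ.trace = 1) (a0 : ℝ) (a : E3) :
    mean (qObs a0 a) ρ = a0 + ⟪a, blochVector ρ⟫ := by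
  simp only [mean, qObs, blochVector, Complex.coe_smul, Matrix.add_mul, Matrix.smul_mul,
    Matrix.one_mul, Matrix.trace_add, Matrix.trace_smul, hρ, Complex.real_smul, mul_one,
    Complex.add_re, Complex.re_ofReal_mul, Complex.ofReal_re, PiLp.inner_apply,
    RCLike.inner_apply, conj_trivial, Fin.sum_univ_three, cons_val_zero, cons_val_one, cons_val]
  ring

theorem variance_eq_mean_sub {n : Type*} [Fintype n] (M ρ : Matrix n n ℂ) :
    variance M ρ = mean (M * M) ρ - mean M ρ ^ 2 := rfl

theorem variance_qObs {ρ : Matrix (Fin 2) (Fin 2) ℂ} (hρ : ρ.trace = 1) (a0 : ℝ) (a : E3) :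
    variance (qObs a0 a) ρ = ‖a‖ ^ 2 - ⟪a, blochVector ρ⟫ ^ 2 := by
  rw [variance_eq_mean_sub, qObs_mul_self, mean_qObs hρ, mean_qObs hρ, real_inner_smul_left]
  ring

theorem norm_blochVector_le_one {ρ : Matrix (Fin 2) (Fin 2) ℂ} (hρ : IsDensityMatrix ρ) :
    ‖blochVector ρ‖ ≤ 1 := by
  obtain ⟨hpsd, htr⟩ := hρ
  have h10 : ρ 1 0 = star (ρ 0 1) := (hpsd.1.apply 1 0).symm
  have h00 : (ρ 0 0).im = 0 := Complex.conj_eq_iff_im.mp (hpsd.1.apply 0 0)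
  have h11 : (ρ 1 1).im = 0 := Complex.conj_eq_iff_im.mp (hpsd.1.apply 1 1)
  have hdet : 0 ≤ ρ.det.re := (Complex.nonneg_iff.mp hpsd.det_nonneg).1
  have htr' : (ρ 0 0).re + (ρ 1 1).re = 1 := by
    simpa [Matrix.trace, Fin.sum_univ_two] using congrArg Complex.re htr
  have hnorm : ‖blochVector ρ‖ ^ 2 = ((ρ 0 0).re + (ρ 1 1).re) ^ 2 - 4 * ρ.det.re := by
    rw [EuclideanSpace.norm_sq_eq, Fin.sum_univ_three, Matrix.det_fin_two]
    simp only [blochVector, mean, pauli1, pauli2, pauli3, Matrix.trace, Matrix.diag_apply,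
      Matrix.cons_mul, Matrix.empty_mul, Matrix.vecMul, dotProduct, Fin.sum_univ_two, of_apply,
      cons_val', cons_val_zero, cons_val_one, cons_val_fin_one, cons_val, Equiv.symm_apply_apply,
      zero_mul, one_mul, neg_mul, zero_add, add_zero, h10, RCLike.star_def, Complex.add_re,
      Complex.sub_re, Complex.neg_re, Complex.mul_re, Complex.conj_re, Complex.conj_im,
      Complex.I_re, Complex.I_im, h00, h11, Real.norm_eq_abs, sq_abs]
    ring
  rw [← abs_norm, ← sq_le_one_iff_abs_le_one, hnorm, htr']
  linarith

theorem lamMin_le_variance_qObs_add (a0 : Fin 2 → ℝ) (a : Fin 2 → E3)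
    {ρ : Matrix (Fin 2) (Fin 2) ℂ} (hρ : IsDensityMatrix ρ) :
    lamMin a ≤ variance (qObs (a0 0) (a 0)) ρ + variance (qObs (a0 1) (a 1)) ρ := by
  have hproj := sum_inner_sq_le_lamMax a (blochVector ρ)
  have hbloch : lamMax a * ‖blochVector ρ‖ ^ 2 ≤ lamMax a :=
    mul_le_of_le_one_right (lamMax_nonneg a)
      (pow_le_one₀ (norm_nonneg _) (norm_blochVector_le_one hρ))
  rw [Fin.sum_univ_two] at hproj
  rw [variance_qObs hρ.2, variance_qObs hρ.2]
  linarith [lamMin_add_lamMax_le a]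

theorem variance_obs3_kronecker {A B C ρ₁ ρ₂ ρ₃ : Matrix (Fin 2) (Fin 2) ℂ}
    (hA : A.IsHermitian) (hB : B.IsHermitian) (hC : C.IsHermitian)
    (hρ₁ : IsDensityMatrix ρ₁) (hρ₂ : IsDensityMatrix ρ₂) (hρ₃ : IsDensityMatrix ρ₃) :
    variance (obs3 A B C) (ρ₁ ⊗ₖ ρ₂ ⊗ₖ ρ₃) = variance A ρ₁ + variance B ρ₂ + variance C ρ₃ := by
  have hfirst : (obs3 A B C * (ρ₁ ⊗ₖ ρ₂ ⊗ₖ ρ₃)).trace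
      = (A * ρ₁).trace + (B * ρ₂).trace + (C * ρ₃).trace := by
    simp only [obs3, Matrix.add_mul, ← Matrix.mul_kronecker_mul, Matrix.trace_add,
      Matrix.trace_kronecker, Matrix.one_mul, hρ₁.2, hρ₂.2, hρ₃.2]
    ring
  have hsecond : (obs3 A B C * obs3 A B C * (ρ₁ ⊗ₖ ρ₂ ⊗ₖ ρ₃)).trace
      = (A * A * ρ₁).trace + (B * B * ρ₂).trace + (C * C * ρ₃).trace
        + 2 * ((A * ρ₁).trace * (B * ρ₂).trace + (A * ρ₁).trace * (C * ρ₃).trace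
          + (B * ρ₂).trace * (C * ρ₃).trace) := by
    simp only [obs3, Matrix.add_mul, Matrix.mul_add, ← Matrix.mul_kronecker_mul,
      Matrix.trace_add, Matrix.trace_kronecker, Matrix.one_mul, Matrix.mul_one,
      hρ₁.2, hρ₂.2, hρ₃.2]
    ring
  have hA₁ := hA.im_trace_mul_eq_zero hρ₁.1.1
  have hB₂ := hB.im_trace_mul_eq_zero hρ₂.1.1
  have hC₃ := hC.im_trace_mul_eq_zero hρ₃.1.1
  simp only [variance, mean, hfirst, hsecond, Complex.add_re, Complex.mul_re, hA₁, hB₂, hC₃,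
    Complex.re_ofNat, Complex.im_ofNat]
  ring

theorem mean_sum_smul {ι n : Type*} [Fintype ι] [Fintype n] (M : Matrix n n ℂ) (p : ι → ℝ)
    (σ : ι → Matrix n n ℂ) : mean M (∑ k, (p k : ℂ) • σ k) = ∑ k, p k * mean M (σ k) := by
  simp [mean, Matrix.mul_sum, Matrix.trace_sum, Complex.re_sum]

theorem sum_mul_variance_le_variance_sum_smul {ι n : Type*} [Fintype ι] [Fintype n]
    (M : Matrix n n ℂ) {p : ι → ℝ} (hp : ∀ k, 0 ≤ p k) (hpsum : ∑ k, p k = 1)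
    (σ : ι → Matrix n n ℂ) :
    ∑ k, p k * variance M (σ k) ≤ variance M (∑ k, (p k : ℂ) • σ k) := by
  have hjensen : (∑ k, p k * mean M (σ k)) ^ 2 ≤ ∑ k, p k * mean M (σ k) ^ 2 := by
    simpa using even_two.convexOn_pow.map_sum_le (p := fun k => mean M (σ k))
      (fun k _ => hp k) hpsum (fun k _ => Set.mem_univ _)
  simp only [variance_eq_mean_sub, mean_sum_smul, mul_sub, Finset.sum_sub_distrib]
  linarith

theorem le_variance_add_variance_sum_smul {ι n : Type*} [Fintype ι] [Fintype n]
    (M₁ M₂ : Matrix n n ℂ) {p : ι → ℝ} (hp : ∀ k, 0 ≤ p k) (hpsum : ∑ k, p k = 1)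
    (σ : ι → Matrix n n ℂ) {c : ℝ} (hc : ∀ k, c ≤ variance M₁ (σ k) + variance M₂ (σ k)) :
    c ≤ variance M₁ (∑ k, (p k : ℂ) • σ k) + variance M₂ (∑ k, (p k : ℂ) • σ k) :=
  calc c = ∑ k, p k * c := by rw [← Finset.sum_mul, hpsum, one_mul]
    _ ≤ ∑ k, p k * (variance M₁ (σ k) + variance M₂ (σ k)) :=
      Finset.sum_le_sum fun k _ => mul_le_mul_of_nonneg_left (hc k) (hp k)
    _ = ∑ k, p k * variance M₁ (σ k) + ∑ k, p k * variance M₂ (σ k) := by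
      simp only [mul_add, Finset.sum_add_distrib]
    _ ≤ _ := add_le_add (sum_mul_variance_le_variance_sum_smul M₁ hp hpsum σ)
      (sum_mul_variance_le_variance_sum_smul M₂ hp hpsum σ)

theorem fully_separable_two_measurements_general
    (a0 b0 c0 : Fin 2 → ℝ) (a b c : Fin 2 → E3)
    (ρ : Matrix ((Fin 2 × Fin 2) × Fin 2) ((Fin 2 × Fin 2) × Fin 2) ℂ)
    (N : ℕ) (p : Fin N → ℝ)
    (ρA ρB ρC : Fin N → Matrix (Fin 2) (Fin 2) ℂ)
    (hp : ∀ k, 0 ≤ p k) (hpsum : ∑ k, p k = 1)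
    (hA : ∀ k, IsDensityMatrix (ρA k)) (hB : ∀ k, IsDensityMatrix (ρB k))
    (hC : ∀ k, IsDensityMatrix (ρC k))
    (hsep : ρ = ∑ k, (p k : ℂ) • (ρA k ⊗ₖ ρB k ⊗ₖ ρC k)) :
    variance (obs3 (qObs (a0 0) (a 0)) (qObs (b0 0) (b 0)) (qObs (c0 0) (c 0))) ρ
        + variance (obs3 (qObs (a0 1) (a 1)) (qObs (b0 1) (b 1)) (qObs (c0 1) (c 1))) ρ
      ≥ lamMin a + lamMin b + lamMin c := by
  subst hsep
  refine le_variance_add_variance_sum_smul _ _ hp hpsum _ fun k => ?_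
  simp only [variance_obs3_kronecker (qObs_isHermitian _ _) (qObs_isHermitian _ _)
    (qObs_isHermitian _ _) (hA k) (hB k) (hC k)]
  linarith [lamMin_le_variance_qObs_add a0 a (hA k), lamMin_le_variance_qObs_add b0 b (hB k),
    lamMin_le_variance_qObs_add c0 c (hC k)]

/-- entanglement criterion for fully separable tripartite states with two
composite measurements. -/
theorem fully_separable_two_measurements
    (a0 b0 c0 : Fin 2 → ℝ) (a b c : Fin 2 → E3)
    (hlia : LinearIndependent ℝ ![a 0, a 1])
    (hlib : LinearIndependent ℝ ![b 0, b 1])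
    (hlic : LinearIndependent ℝ ![c 0, c 1])
    (ρ : Matrix ((Fin 2 × Fin 2) × Fin 2) ((Fin 2 × Fin 2) × Fin 2) ℂ)
    (N : ℕ) (p : Fin N → ℝ)
    (ρA ρB ρC : Fin N → Matrix (Fin 2) (Fin 2) ℂ)
    (hp : ∀ k, 0 ≤ p k) (hpsum : ∑ k, p k = 1)
    (hA : ∀ k, IsDensityMatrix (ρA k)) (hB : ∀ k, IsDensityMatrix (ρB k))
    (hC : ∀ k, IsDensityMatrix (ρC k))
    (hsep : ρ = ∑ k, (p k : ℂ) • (ρA k ⊗ₖ ρB k ⊗ₖ ρC k)) :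
    variance (obs3 (qObs (a0 0) (a 0)) (qObs (b0 0) (b 0)) (qObs (c0 0) (c 0))) ρ
        + variance (obs3 (qObs (a0 1) (a 1)) (qObs (b0 1) (b 1)) (qObs (c0 1) (c 1))) ρ
      ≥ lamMin a + lamMin b + lamMin c :=
  fully_separable_two_measurements_general a0 b0 c0 a b c ρ N p ρA ρB ρC hp hpsum hA hB hC hsep

end
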